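/- Let m > 1/2 and κ ≥ 0. The function λ(θ) = (m² + κ²·sin²θ) / (2·(m − sin θ·cos θ)) is differentiable on ℝ and satisfies, for all θ, the identity λ′(θ) · (m − sin θ·cos θ) = λ(θ)·cos 2θ + (κ²/2)·sin 2θ. (That is, along the bang flow θ̇ = m − sin θ cos θ, λ satisfies the adjoint equation λ̇ = λ cos 2θ + λ_a sin 2θ with λ_a = κ²/2.) -/

import Mathlib

open Real

/-!
The denominator never vanishes because `sin θ cos θ = sin (2θ) / 2 ≤ 1/2 < m`. With
`N θ = m² + κ² sin² θ` and `D θ = 2 (m - sin θ cos θ)` one has `N' = κ² sin 2θ` and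
`D' = -2 cos 2θ`, so the quotient rule gives `λ' · D = N' - λ D' = κ² sin 2θ + 2 λ cos 2θ`;
halving both sides is the claimed identity.
-/

lemma sin_mul_cos_le_half (θ : ℝ) : sin θ * cos θ ≤ 1 / 2 := by
  have h : sin θ * cos θ = sin (2 * θ) / 2 := by rw [sin_two_mul]; ring
  linarith [sin_le_one (2 * θ)]

lemma hasDerivAt_sin_sq (θ : ℝ) : HasDerivAt (fun x => sin x ^ 2) (sin (2 * θ)) θ := by
  refine ((hasDerivAt_sin θ).fun_pow 2).congr_deriv ?_
  rw [sin_two_mul]; ring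

lemma hasDerivAt_sin_mul_cos (θ : ℝ) :
    HasDerivAt (fun x => sin x * cos x) (cos (2 * θ)) θ := by
  refine ((hasDerivAt_sin θ).fun_mul (hasDerivAt_cos θ)).congr_deriv ?_
  rw [cos_two_mul']; ring

theorem stmt_14_general (m : ℝ) (hm : 1 / 2 < m) (κ : ℝ) :
    Differentiable ℝ
      (fun θ : ℝ => (m ^ 2 + κ ^ 2 * Real.sin θ ^ 2)
        / (2 * (m - Real.sin θ * Real.cos θ))) ∧
    ∀ θ : ℝ,
      deriv (fun θ : ℝ => (m ^ 2 + κ ^ 2 * Real.sin θ ^ 2)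
          / (2 * (m - Real.sin θ * Real.cos θ))) θ
        * (m - Real.sin θ * Real.cos θ)
      = (m ^ 2 + κ ^ 2 * Real.sin θ ^ 2) / (2 * (m - Real.sin θ * Real.cos θ))
          * Real.cos (2 * θ)
        + κ ^ 2 / 2 * Real.sin (2 * θ) := by
  have hpos (θ : ℝ) : 0 < m - sin θ * cos θ := by linarith [sin_mul_cos_le_half θ]
  have hderiv (θ : ℝ) := (((hasDerivAt_sin_sq θ).const_mul (κ ^ 2)).const_add (m ^ 2)).fun_div
    (((hasDerivAt_sin_mul_cos θ).const_sub m).const_mul 2) (by linarith [hpos θ])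
  refine ⟨fun θ => (hderiv θ).differentiableAt, fun θ => ?_⟩
  rw [(hderiv θ).deriv]
  have := (hpos θ).ne'
  field_simp
  ring

theorem stmt_14 (m : ℝ) (hm : 1 / 2 < m) (κ : ℝ) (hκ : 0 ≤ κ) :
    Differentiable ℝ
      (fun θ : ℝ => (m ^ 2 + κ ^ 2 * Real.sin θ ^ 2)
        / (2 * (m - Real.sin θ * Real.cos θ))) ∧
    ∀ θ : ℝ,
      deriv (fun θ : ℝ => (m ^ 2 + κ ^ 2 * Real.sin θ ^ 2)
          / (2 * (m - Real.sin θ * Real.cos θ))) θ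
        * (m - Real.sin θ * Real.cos θ)
      = (m ^ 2 + κ ^ 2 * Real.sin θ ^ 2) / (2 * (m - Real.sin θ * Real.cos θ))
          * Real.cos (2 * θ)
        + κ ^ 2 / 2 * Real.sin (2 * θ) :=
  stmt_14_general m hm κ
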